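/- arXiv:1306.2710 — 6 statements merged into one kernel-verified Lean document; each statement's English description precedes it below -/
import Mathlib

section
/- In the setting where, for each n≥1, S_n*(p) is built from n tips 0,...,n-1 with i.i.d. node depths (A_i)_{1≤i≤n-1} of continuous CDF F on [0,T] and i.i.d. Bernoulli(p) marks (R_i)_{0≤i≤n-1} (S_n*(p) being the sum over consecutive sampled tips j<j' of max{A_{j+1},...,A_{j'}}), one has lim_{n→∞} (1/n)·E(S_n*(p)) = p·∫₀^T (1-F(t))/(1-(1-p)F(t)) dt. -/
/-!
Independence of the depths and the marks splits the expectation of each summand of `S_n*`: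
tips `j < j'` are consecutive sampled tips with probability `p² (1-p)^(k-1)`, `k = j' - j`, and
the maximum of `k` depths has distribution function `F^k`, hence mean `∫₀^T (1 - F^k)`.
So `E S_n*` is the sum over `m < n` of the partial sums `u_m` of a series which, after exchanging
sum and integral (dominated by a geometric series), sums to `p ∫₀^T (1-F)/(1-(1-p)F)`;
Cesàro's lemma then gives the limit of `E S_n* / n`.
-/

open MeasureTheory ProbabilityTheory Filter Set

/-- The maximum of `A i` over `j < i ≤ j'` (junk value `0` if the range is empty). -/
noncomputable def blockMax (A : ℕ → ℝ) (j j' : ℕ) : ℝ :=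
  if h : j < j' then (Finset.Ioc j j').sup' (by simpa [Finset.nonempty_Ioc] using h) A else 0

/-- The surviving phylogenetic diversity minus the stem age: tips are `0, ..., n-1`,
tip `i` is sampled when `R i = true`, and we sum, over each pair `j < j'` of consecutive
sampled tips, the maximum of the node depths `A (j+1), ..., A j'`. -/
noncomputable def survPD (A : ℕ → ℝ) (R : ℕ → Bool) (n : ℕ) : ℝ :=
  ∑ j ∈ Finset.range n, ∑ j' ∈ Finset.range n,
    if j < j' ∧ R j = true ∧ R j' = true ∧ (∀ i ∈ Finset.Ioo j j', R i = false)
    then blockMax A j j' else 0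

lemma blockMax_le_iff {v : ℕ → ℝ} {j j' : ℕ} (h : j < j') {t : ℝ} :
    blockMax v j j' ≤ t ↔ ∀ i ∈ Finset.Ioc j j', v i ≤ t := by
  rw [blockMax, dif_pos h, Finset.sup'_le_iff]

lemma blockMax_mem_Icc {v : ℕ → ℝ} {b : ℝ} (hv : ∀ i, v i ∈ Icc 0 b) (j j' : ℕ) :
    blockMax v j j' ∈ Icc 0 b := by
  unfold blockMax
  split_ifs
  · obtain ⟨i, -, hmax⟩ := Finset.exists_mem_eq_sup' _ v
    exact hmax ▸ hv i
  · exact ⟨le_rfl, (hv 0).1.trans (hv 0).2⟩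

lemma measurable_blockMax (j j' : ℕ) : Measurable fun v : ℕ → ℝ => blockMax v j j' := by
  unfold blockMax
  split_ifs <;> fun_prop

def ConsecutiveSampled (w : ℕ → Bool) (j j' : ℕ) : Prop :=
  j < j' ∧ w j = true ∧ w j' = true ∧ ∀ i ∈ Finset.Ioo j j', w i = false

lemma survPD_eq_sum_mul_indicator (v : ℕ → ℝ) (w : ℕ → Bool) (n : ℕ) :
    survPD v w n = ∑ j ∈ Finset.range n, ∑ j' ∈ Finset.range n,
      blockMax v j j' * {w | ConsecutiveSampled w j j'}.indicator 1 w := by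
  classical
  refine Finset.sum_congr rfl fun j _ => Finset.sum_congr rfl fun j' _ => ?_
  rw [Set.indicator_apply, Pi.one_apply, mul_boole]
  exact if_congr Iff.rfl rfl rfl

lemma consecutiveSampled_iff {w : ℕ → Bool} {j j' : ℕ} (h : j < j') :
    ConsecutiveSampled w j j' ↔ ∀ i ∈ Finset.Icc j j', w i = decide (i ∉ Finset.Ioo j j') := by
  constructor
  · rintro ⟨-, hj, hj', hmid⟩ i hi
    by_cases hio : i ∈ Finset.Ioo j j'
    · simp [hio, hmid i hio]
    · simp only [Finset.mem_Icc, Finset.mem_Ioo] at hi hio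
      obtain rfl | rfl : i = j ∨ i = j' := by omega
      all_goals simp_all
  · intro H
    refine ⟨h, ?_, ?_, fun i hi => ?_⟩
    · simpa using H j (by simp [h.le])
    · simpa using H j' (by simp [h.le])
    · simpa [hi] using H i (Finset.Ioo_subset_Icc_self hi)

lemma measurableSet_consecutiveSampled (j j' : ℕ) :
    MeasurableSet {w : ℕ → Bool | ConsecutiveSampled w j j'} := by
  unfold ConsecutiveSampled
  measurability

lemma sum_range_sum_range_ite_lt {M : Type*} [AddCommMonoid M] (g : ℕ → M) (n : ℕ) :
    ∑ j ∈ Finset.range n, ∑ j' ∈ Finset.range n, (if j < j' then g (j' - j) else 0)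
      = ∑ m ∈ Finset.range n, ∑ i ∈ Finset.range m, g (i + 1) := by
  rw [Finset.sum_comm]
  refine Finset.sum_congr rfl fun m hm => ?_
  have hfilter : (Finset.range n).filter (· < m) = Finset.range m := by
    ext i
    simp only [Finset.mem_filter, Finset.mem_range] at hm ⊢
    omega
  rw [← Finset.sum_filter, hfilter, ← Finset.sum_range_reflect (fun i => g (i + 1)) m]
  exact Finset.sum_congr rfl fun i hi => by rw [Finset.mem_range] at hi; congr 1; omega

section Probability

variable {Ω : Type*} [MeasurableSpace Ω] {μ : Measure Ω}

lemma ae_mem_Icc_of_measureReal_le [IsProbabilityMeasure μ] {X : Ω → ℝ} (hX : Measurable X)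
    {T : ℝ} (h0 : μ.real {ω | X ω ≤ 0} = 0) (hT : μ.real {ω | X ω ≤ T} = 1) :
    ∀ᵐ ω ∂μ, X ω ∈ Icc 0 T := by
  have hpos : ∀ᵐ ω ∂μ, ¬ X ω ≤ 0 :=
    measure_eq_zero_iff_ae_notMem.mp ((measureReal_eq_zero_iff).mp h0)
  have hle : ∀ᵐ ω ∂μ, X ω ≤ T := by
    rw [ae_iff, ← measureReal_eq_zero_iff, ← compl_ofPred,
      probReal_compl_eq_one_sub (measurableSet_le hX measurable_const), hT, sub_self]
  filter_upwards [hpos, hle] with ω hω0 hωT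
  exact ⟨(not_le.mp hω0).le, hωT⟩

lemma measureReal_blockMax_le {A : ℕ → Ω → ℝ} (hA : iIndepFun A μ) {t c : ℝ}
    (hc : ∀ i, μ.real {ω | A i ω ≤ t} = c) {j j' : ℕ} (h : j < j') :
    μ.real {ω | blockMax (fun i => A i ω) j j' ≤ t} = c ^ (j' - j) := by
  have hset :
      {ω | blockMax (fun i => A i ω) j j' ≤ t} = ⋂ i ∈ Finset.Ioc j j', A i ⁻¹' Iic t := by
    ext ω
    simp [blockMax_le_iff h]
  rw [hset, measureReal_def, hA.measure_inter_preimage_eq_mul _ fun _ _ => measurableSet_Iic,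
    ENNReal.toReal_prod]
  simp_rw [← measureReal_def]
  exact (Finset.prod_congr rfl fun i _ => hc i).trans (by rw [Finset.prod_const, Nat.card_Ioc])

lemma integral_eq_intervalIntegral_one_sub_cdf [IsProbabilityMeasure μ] {X : Ω → ℝ}
    (hX : Measurable X) {T : ℝ} (hXT : ∀ᵐ ω ∂μ, X ω ∈ Icc 0 T) {G : ℝ → ℝ}
    (hG : ∀ t ∈ Ioc 0 T, μ.real {ω | X ω ≤ t} = G t) :
    ∫ ω, X ω ∂μ = ∫ t in (0 : ℝ)..T, (1 - G t) := by
  obtain ⟨ω₀, hω₀⟩ := hXT.exists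
  have hXint : Integrable X μ := by
    refine .of_bound hX.aestronglyMeasurable T ?_
    filter_upwards [hXT] with ω hω
    rw [Real.norm_of_nonneg hω.1]
    exact hω.2
  have htail : EqOn (fun t => μ.real {ω | t < X ω}) ((Ioc 0 T).indicator (1 - G)) (Ioi 0) := by
    intro t ht
    by_cases htT : t ≤ T
    · rw [indicator_of_mem (show t ∈ Ioc 0 T from ⟨ht, htT⟩), Pi.sub_apply, Pi.one_apply,
        ← hG t ⟨ht, htT⟩, ← probReal_compl_eq_one_sub (measurableSet_le hX measurable_const)]
      simp only [compl_ofPred, not_le]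
    · rw [indicator_of_notMem fun h => htT h.2]
      refine (measureReal_eq_zero_iff).mpr (measure_eq_zero_iff_ae_notMem.mpr ?_)
      filter_upwards [hXT] with ω hω
      exact fun h => htT (h.le.trans hω.2)
  rw [hXint.integral_eq_integral_meas_lt (hXT.mono fun ω hω => hω.1),
    setIntegral_congr_fun measurableSet_Ioi htail, setIntegral_indicator measurableSet_Ioc,
    inter_eq_right.mpr Ioc_subset_Ioi_self, intervalIntegral.integral_of_le (hω₀.1.trans hω₀.2)]
  rfl

lemma measureReal_forall_eq_of_iIndepFun [IsProbabilityMeasure μ] {ι : Type*} {R : ι → Ω → Bool}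
    (hRm : ∀ i, Measurable (R i)) (hR : iIndepFun R μ) {p : ℝ}
    (hp : ∀ i, μ.real {ω | R i ω = true} = p) (s : Finset ι) (b : ι → Bool) :
    μ.real {ω | ∀ i ∈ s, R i ω = b i} = ∏ i ∈ s, if b i then p else 1 - p := by
  have hset : {ω | ∀ i ∈ s, R i ω = b i} = ⋂ i ∈ s, R i ⁻¹' {b i} := by
    ext ω
    simp
  rw [hset, measureReal_def, hR.measure_inter_preimage_eq_mul _ fun _ _ => .of_discrete,
    ENNReal.toReal_prod]
  refine Finset.prod_congr rfl fun i _ => ?_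
  rw [← measureReal_def]
  cases b i
  · have hcompl : R i ⁻¹' {false} = {ω | R i ω = true}ᶜ := by
      ext ω
      simp
    rw [if_neg Bool.false_ne_true, hcompl,
      probReal_compl_eq_one_sub (s := {ω | R i ω = true}) (hRm i (measurableSet_singleton true)),
      hp i]
  · exact hp i

lemma measureReal_consecutiveSampled [IsProbabilityMeasure μ] {R : ℕ → Ω → Bool}
    (hRm : ∀ i, Measurable (R i)) (hR : iIndepFun R μ) {p : ℝ}
    (hp : ∀ i, μ.real {ω | R i ω = true} = p) {j j' : ℕ} (h : j < j') :
    μ.real {ω | ConsecutiveSampled (fun i => R i ω) j j'} = p ^ 2 * (1 - p) ^ (j' - j - 1) := by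
  classical
  simp_rw [consecutiveSampled_iff h]
  rw [measureReal_forall_eq_of_iIndepFun hRm hR hp, Finset.prod_ite]
  simp only [decide_eq_true_eq, not_not, Finset.prod_const, Finset.filter_notMem_eq_sdiff,
    Finset.filter_mem_eq_inter]
  rw [Finset.inter_eq_right.mpr Finset.Ioo_subset_Icc_self,
    Finset.card_sdiff_of_subset Finset.Ioo_subset_Icc_self, Nat.card_Icc, Nat.card_Ioo,
    show j' + 1 - j - (j' - j - 1) = 2 by omega]

lemma ProbabilityTheory.IndepFun.integral_comp_mul_indicator_comp {α β : Type*}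
    [MeasurableSpace α] [MeasurableSpace β] {X : Ω → α} {Y : Ω → β} (hXY : IndepFun X Y μ)
    (hX : Measurable X) (hY : Measurable Y) {φ : α → ℝ} (hφ : Measurable φ) {S : Set β}
    (hS : MeasurableSet S) :
    ∫ ω, φ (X ω) * S.indicator 1 (Y ω) ∂μ = (∫ ω, φ (X ω) ∂μ) * μ.real (Y ⁻¹' S) := by
  have hψ : Measurable (S.indicator (1 : β → ℝ)) := measurable_one.indicator hS
  rw [← integral_indicator_one (hY hS)]
  exact (hXY.comp hφ hψ).integral_mul_eq_mul_integral (hφ.comp hX).aestronglyMeasurable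
    (hψ.comp hY).aestronglyMeasurable

variable [IsProbabilityMeasure μ] {A : ℕ → Ω → ℝ} {R : ℕ → Ω → Bool} {T p : ℝ} {F : ℝ → ℝ}

lemma integral_blockMax (hAm : ∀ i, Measurable (A i)) (hA : iIndepFun A μ)
    (hbd : ∀ᵐ ω ∂μ, ∀ i, A i ω ∈ Icc 0 T)
    (hcdf : ∀ i, ∀ t ∈ Ioc 0 T, μ.real {ω | A i ω ≤ t} = F t) {j j' : ℕ} (h : j < j') :
    ∫ ω, blockMax (fun i => A i ω) j j' ∂μ = ∫ t in (0 : ℝ)..T, (1 - F t ^ (j' - j)) :=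
  integral_eq_intervalIntegral_one_sub_cdf
    ((measurable_blockMax j j').comp (measurable_pi_lambda _ hAm))
    (hbd.mono fun _ hω => blockMax_mem_Icc hω j j') fun t ht =>
      measureReal_blockMax_le hA (fun i => hcdf i t ht) h

lemma integral_blockMax_mul_indicator_consecutiveSampled (hAm : ∀ i, Measurable (A i))
    (hA : iIndepFun A μ) (hbd : ∀ᵐ ω ∂μ, ∀ i, A i ω ∈ Icc 0 T)
    (hcdf : ∀ i, ∀ t ∈ Ioc 0 T, μ.real {ω | A i ω ≤ t} = F t)
    (hRm : ∀ i, Measurable (R i)) (hR : iIndepFun R μ) (hp : ∀ i, μ.real {ω | R i ω = true} = p)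
    (hAR : IndepFun (fun ω i => A i ω) (fun ω i => R i ω) μ) (j j' : ℕ) :
    ∫ ω, blockMax (fun i => A i ω) j j' *
        {w | ConsecutiveSampled w j j'}.indicator 1 (fun i => R i ω) ∂μ
      = if j < j' then p ^ 2 * (1 - p) ^ (j' - j - 1) * ∫ t in (0 : ℝ)..T, (1 - F t ^ (j' - j))
        else 0 := by
  rw [hAR.integral_comp_mul_indicator_comp (measurable_pi_lambda _ hAm)
    (measurable_pi_lambda _ hRm) (measurable_blockMax j j') (measurableSet_consecutiveSampled j j')]
  split_ifs with h
  · rw [integral_blockMax hAm hA hbd hcdf h, preimage_ofPred_eq,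
      measureReal_consecutiveSampled hRm hR hp h, mul_comm]
  · have hempty : (fun ω i => R i ω) ⁻¹' {w | ConsecutiveSampled w j j'} = ∅ :=
      eq_empty_of_forall_notMem fun _ hω => h hω.1
    rw [hempty, measureReal_empty, mul_zero]

lemma integral_survPD (hAm : ∀ i, Measurable (A i))
    (hA : iIndepFun A μ) (hbd : ∀ᵐ ω ∂μ, ∀ i, A i ω ∈ Icc 0 T)
    (hcdf : ∀ i, ∀ t ∈ Ioc 0 T, μ.real {ω | A i ω ≤ t} = F t)
    (hRm : ∀ i, Measurable (R i)) (hR : iIndepFun R μ) (hp : ∀ i, μ.real {ω | R i ω = true} = p)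
    (hAR : IndepFun (fun ω i => A i ω) (fun ω i => R i ω) μ) (n : ℕ) :
    ∫ ω, survPD (fun i => A i ω) (fun i => R i ω) n ∂μ
      = ∑ m ∈ Finset.range n, ∑ i ∈ Finset.range m,
          p ^ 2 * (1 - p) ^ i * ∫ t in (0 : ℝ)..T, (1 - F t ^ (i + 1)) := by
  have hint : ∀ j j', Integrable (fun ω => blockMax (fun i => A i ω) j j' *
      {w | ConsecutiveSampled w j j'}.indicator 1 (fun i => R i ω)) μ := by
    intro j j'
    have hmeas := ((measurable_blockMax j j').comp (measurable_pi_lambda _ hAm)).mul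
      ((measurable_one.indicator (measurableSet_consecutiveSampled j j')).comp
        (measurable_pi_lambda _ hRm))
    refine .of_bound hmeas.aestronglyMeasurable T ?_
    filter_upwards [hbd] with ω hω
    have hmax := blockMax_mem_Icc hω j j'
    rw [norm_mul, Real.norm_of_nonneg hmax.1]
    refine (mul_le_of_le_one_right hmax.1 ?_).trans hmax.2
    exact (norm_indicator_le_norm_self _ _).trans norm_one.le
  simp_rw [survPD_eq_sum_mul_indicator]
  rw [integral_finsetSum _ fun j _ => integrable_finsetSum _ fun j' _ => hint j j']
  simp_rw [integral_finsetSum _ fun j' _ => hint _ j',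
    integral_blockMax_mul_indicator_consecutiveSampled hAm hA hbd hcdf hRm hR hp hAR]
  exact sum_range_sum_range_ite_lt
    (fun k => p ^ 2 * (1 - p) ^ (k - 1) * ∫ t in (0 : ℝ)..T, (1 - F t ^ k)) n

end Probability

lemma hasSum_mul_geometric_mul_one_sub_pow {p x : ℝ} (hp : p ∈ Ioc 0 1) (hx : x ∈ Icc 0 1) :
    HasSum (fun i : ℕ => p * (1 - p) ^ i * (1 - x ^ (i + 1))) ((1 - x) / (1 - (1 - p) * x)) := by
  obtain ⟨hp0, hp1⟩ := hp
  obtain ⟨hx0, hx1⟩ := hx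
  have hq : (1 - p) * x < 1 := by nlinarith
  have h1 := hasSum_geometric_of_lt_one (r := 1 - p) (by linarith) (by linarith)
  have h2 := hasSum_geometric_of_lt_one (r := (1 - p) * x) (by positivity) hq
  have hterm : (fun i : ℕ => p * (1 - p) ^ i * (1 - x ^ (i + 1)))
      = fun i => p * (1 - p) ^ i - p * x * ((1 - p) * x) ^ i := by
    ext i
    rw [mul_pow]
    ring
  have hsum :
      (1 - x) / (1 - (1 - p) * x) = p * (1 - (1 - p))⁻¹ - p * x * (1 - (1 - p) * x)⁻¹ := by
    have hden : 1 - (1 - p) * x ≠ 0 := by linarith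
    rw [sub_sub_cancel, mul_inv_cancel₀ hp0.ne', eq_sub_iff_add_eq, ← div_eq_mul_inv,
      ← add_div, div_eq_one_iff_eq hden]
    ring
  rw [hterm, hsum]
  exact (h1.mul_left p).sub (h2.mul_left (p * x))

lemma hasSum_intervalIntegral_mul_geometric_mul_one_sub_pow {p : ℝ} (hp : p ∈ Ioc 0 1)
    {a b : ℝ} {F : ℝ → ℝ} (hF : Measurable F) (hF01 : ∀ t ∈ uIoc a b, F t ∈ Icc 0 1) :
    HasSum (fun i : ℕ => ∫ t in a..b, p * (1 - p) ^ i * (1 - F t ^ (i + 1)))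
      (∫ t in a..b, (1 - F t) / (1 - (1 - p) * F t)) := by
  have hq := hasSum_geometric_of_lt_one (r := 1 - p) (by linarith [hp.2]) (by linarith [hp.1])
  refine intervalIntegral.hasSum_integral_of_dominated_convergence (fun i _ => p * (1 - p) ^ i)
    (fun i => by fun_prop) (fun i => ae_of_all _ fun t ht => ?_)
    (ae_of_all _ fun _ _ => (hq.mul_left p).summable) intervalIntegrable_const
    (ae_of_all _ fun t ht => hasSum_mul_geometric_mul_one_sub_pow hp (hF01 t ht))
  obtain ⟨hx0, hx1⟩ := hF01 t ht
  have hpow : F t ^ (i + 1) ∈ Icc 0 1 := ⟨pow_nonneg hx0 _, pow_le_one₀ hx0 hx1⟩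
  have hc : 0 ≤ p * (1 - p) ^ i := mul_nonneg hp.1.le (pow_nonneg (by linarith [hp.2]) _)
  rw [norm_mul, Real.norm_of_nonneg hc, Real.norm_of_nonneg (by linarith [hpow.2])]
  exact mul_le_of_le_one_right hc (by linarith [hpow.1])

theorem expected_surviving_PD_per_tip_limit_general
    {Ω : Type*} [MeasurableSpace Ω] (μ : Measure Ω) [IsProbabilityMeasure μ]
    (p : ℝ) (hp : p ∈ Set.Ioc (0 : ℝ) 1)
    (T : ℝ) (hT : 0 < T)
    (F : ℝ → ℝ) (hFcont : Continuous F)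
    (hF0 : F 0 = 0) (hFT : F T = 1)
    (A : ℕ → Ω → ℝ) (hAmeas : ∀ i, Measurable (A i))
    (hAiid : iIndepFun A μ)
    (hAcdf : ∀ i, ∀ t ∈ Set.Icc 0 T, (μ {ω | A i ω ≤ t}).toReal = F t)
    (R : ℕ → Ω → Bool) (hRmeas : ∀ i, Measurable (R i))
    (hRiid : iIndepFun R μ)
    (hRber : ∀ i, (μ {ω | R i ω = true}).toReal = p)
    (hindep : IndepFun (fun ω i => A i ω) (fun ω i => R i ω) μ) :
    Tendsto
      (fun n : ℕ => (∫ ω, survPD (fun i => A i ω) (fun i => R i ω) n ∂μ) / n)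
      atTop
      (nhds (p * ∫ t in (0:ℝ)..T, (1 - F t) / (1 - (1 - p) * F t))) := by
  have hcdf : ∀ i, ∀ t ∈ Ioc 0 T, μ.real {ω | A i ω ≤ t} = F t :=
    fun i t ht => hAcdf i t (Ioc_subset_Icc_self ht)
  have hbd : ∀ᵐ ω ∂μ, ∀ i, A i ω ∈ Icc 0 T := ae_all_iff.2 fun i =>
    ae_mem_Icc_of_measureReal_le (hAmeas i) ((hAcdf i 0 ⟨le_rfl, hT.le⟩).trans hF0)
      ((hAcdf i T ⟨hT.le, le_rfl⟩).trans hFT)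
  have hF01 : ∀ t ∈ uIoc 0 T, F t ∈ Icc 0 1 := fun t ht => by
    rw [← hcdf 0 t (uIoc_of_le hT.le ▸ ht)]
    exact ⟨measureReal_nonneg, measureReal_le_one⟩
  have hlim := ((hasSum_intervalIntegral_mul_geometric_mul_one_sub_pow hp hFcont.measurable
    hF01).mul_left p).tendsto_sum_nat.cesaro
  convert hlim using 2 with n
  rw [integral_survPD hAmeas hAiid hbd hcdf hRmeas hRiid hRber hindep, div_eq_inv_mul]
  simp only [intervalIntegral.integral_const_mul, ← mul_assoc, ← pow_two]

/-- `lim_{n→∞} (1/n) E(S_n*(p)) = p ∫₀^T (1-F t)/(1-(1-p) F t) dt`. -/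
theorem expected_surviving_PD_per_tip_limit
    {Ω : Type*} [MeasurableSpace Ω] (μ : Measure Ω) [IsProbabilityMeasure μ]
    (p : ℝ) (hp : p ∈ Set.Ioc (0 : ℝ) 1)
    (T : ℝ) (hT : 0 < T)
    (F : ℝ → ℝ) (hFcont : Continuous F) (hFmono : Monotone F)
    (hF0 : F 0 = 0) (hFT : F T = 1)
    (A : ℕ → Ω → ℝ) (hAmeas : ∀ i, Measurable (A i))
    (hAiid : iIndepFun A μ)
    (hAcdf : ∀ i, ∀ t ∈ Set.Icc 0 T, (μ {ω | A i ω ≤ t}).toReal = F t)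
    (R : ℕ → Ω → Bool) (hRmeas : ∀ i, Measurable (R i))
    (hRiid : iIndepFun R μ)
    (hRber : ∀ i, (μ {ω | R i ω = true}).toReal = p)
    (hindep : IndepFun (fun ω i => A i ω) (fun ω i => R i ω) μ) :
    Tendsto
      (fun n : ℕ => (∫ ω, survPD (fun i => A i ω) (fun i => R i ω) n ∂μ) / n)
      atTop
      (nhds (p * ∫ t in (0:ℝ)..T, (1 - F t) / (1 - (1 - p) * F t))) :=
  expected_surviving_PD_per_tip_limit_general μ p hp T hT F hFcont hF0 hFT A hAmeas hAiid hAcdf R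
    hRmeas hRiid hRber hindep
end

section
/- Let b>0, T>0 and define F_T(t) := t(1+bT)/(T(1+bt)) for t∈[0,T] (the node-depth CDF of a critical constant-rate birth–death process with b=d). Define π_T(p) := p·∫₀^T (1-F_T(t))/(1-(1-p)F_T(t)) dt / ∫₀^T (1-F_T(t)) dt. Then for every p∈(0,1] with p(1+bT)≠1, π_T(p) = p·R(x(p))/R(x(1)), where R(x) := ((1+x)ln(1+x) - x)/x² and x(p) := -1 + p(1+bT). -/
/-!
Clearing the common factor `T(1+bt)`, the integrand `(1-F_T)/(1-(1-p)F_T)` becomes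
`(T-t)/(T+x t)` with `x = x(p)`, and `1 - F_T` is the case `p = 1`, where `x(1) = bT`.
The antiderivative `-t/x + T(1+x)/x² · log(T+xt)` gives `∫₀^T (T-t)/(T+xt) dt = T R(x)`,
and the factors `T` cancel in the ratio.
-/

open MeasureTheory Filter Set

/-- `R(x) = ((1+x) ln(1+x) - x)/x²`. -/
noncomputable def Rfun (x : ℝ) : ℝ := ((1 + x) * Real.log (1 + x) - x) / x ^ 2

/-- The node-depth CDF of a critical constant-rate birth–death process:
`F_T(t) = t(1+bT)/(T(1+bt))`. -/
noncomputable def criticalCDF (b T t : ℝ) : ℝ := t * (1 + b * T) / (T * (1 + b * t))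

/-- The phylogenetic diversity ratio
`π_T(p) = p ∫₀^T (1-F_T)/(1-(1-p)F_T) dt / ∫₀^T (1-F_T) dt` for the critical CDF. -/
noncomputable def piTcrit (b T p : ℝ) : ℝ :=
  (p * ∫ t in (0:ℝ)..T, (1 - criticalCDF b T t) / (1 - (1 - p) * criticalCDF b T t))
    / ∫ t in (0:ℝ)..T, (1 - criticalCDF b T t)

lemma add_mul_pos_of_mem_uIcc {T x t : ℝ} (hT : 0 < T) (hx : -1 < x)
    (ht : t ∈ uIcc 0 T) : 0 < T + x * t := by
  rw [uIcc_of_le hT.le] at ht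
  rcases le_or_gt 0 x with h | h
  · nlinarith [ht.1]
  · nlinarith [ht.2]

lemma integral_sub_div_add_mul (T x : ℝ) (hT : 0 < T) (hx : -1 < x) (hx0 : x ≠ 0) :
    ∫ t in (0:ℝ)..T, (T - t) / (T + x * t) = T * Rfun x := by
  have hpos : ∀ t ∈ uIcc (0:ℝ) T, 0 < T + x * t := fun t ht => add_mul_pos_of_mem_uIcc hT hx ht
  have hderiv : ∀ t ∈ uIcc (0:ℝ) T,
      HasDerivAt (fun t => -t / x + T * (1 + x) / x ^ 2 * Real.log (T + x * t))
        ((T - t) / (T + x * t)) t := by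
    intro t ht
    have hlin : HasDerivAt (fun t : ℝ => T + x * t) x t := by
      simpa using ((hasDerivAt_id t).const_mul x).const_add T
    have hsum := ((hasDerivAt_id t).neg.div_const x).add
      ((hlin.log (hpos t ht).ne').const_mul (T * (1 + x) / x ^ 2))
    refine hsum.congr_deriv ?_
    field_simp [(hpos t ht).ne']
    ring
  have hcont : ContinuousOn (fun t => (T - t) / (T + x * t)) (uIcc 0 T) :=
    (by fun_prop : Continuous fun t : ℝ => T - t).continuousOn.div (by fun_prop)
      fun t ht => (hpos t ht).ne'
  rw [intervalIntegral.integral_eq_sub_of_hasDerivAt hderiv hcont.intervalIntegrable]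
  have hlog : Real.log (T + x * T) = Real.log T + Real.log (1 + x) := by
    rw [show T + x * T = T * (1 + x) by ring, Real.log_mul hT.ne' (by linarith)]
  simp only [Rfun, mul_zero, add_zero, neg_zero, zero_div, hlog]
  field_simp
  ring

lemma one_sub_criticalCDF {b T t : ℝ} (hT : T ≠ 0) (ht : 1 + b * t ≠ 0) :
    1 - criticalCDF b T t = (T - t) / (T * (1 + b * t)) := by
  rw [criticalCDF, eq_div_iff (mul_ne_zero hT ht), sub_mul, div_mul_cancel₀ _ (mul_ne_zero hT ht)]
  ring

lemma one_sub_mul_criticalCDF {b T t : ℝ} (p : ℝ) (hT : T ≠ 0) (ht : 1 + b * t ≠ 0) :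
    1 - (1 - p) * criticalCDF b T t = (T + (-1 + p * (1 + b * T)) * t) / (T * (1 + b * t)) := by
  rw [criticalCDF, eq_div_iff (mul_ne_zero hT ht), sub_mul, mul_assoc,
    div_mul_cancel₀ _ (mul_ne_zero hT ht)]
  ring

lemma integral_criticalCDF_ratio {b T p : ℝ} (hb : 0 ≤ b) (hT : 0 < T) (hp : 0 < p)
    (hpx : p * (1 + b * T) ≠ 1) :
    ∫ t in (0:ℝ)..T, (1 - criticalCDF b T t) / (1 - (1 - p) * criticalCDF b T t)
      = T * Rfun (-1 + p * (1 + b * T)) := by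
  have hx : -1 < -1 + p * (1 + b * T) := by
    have : 0 < p * (1 + b * T) := mul_pos hp (by positivity)
    linarith
  have hx0 : -1 + p * (1 + b * T) ≠ 0 := fun h => hpx (by linarith)
  rw [← integral_sub_div_add_mul T _ hT hx hx0]
  refine intervalIntegral.integral_congr fun t ht => ?_
  have hbt : 1 + b * t ≠ 0 := by
    rw [uIcc_of_le hT.le] at ht
    nlinarith [ht.1]
  simp only [one_sub_criticalCDF hT.ne' hbt, one_sub_mul_criticalCDF p hT.ne' hbt]
  exact div_div_div_cancel_right₀ (by positivity) _ _

/-- for the critical constant-rate birth–death process,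
`π_T(p) = p R(x(p)) / R(x(1))` with `R(x) = ((1+x)ln(1+x)-x)/x²` and `x(p) = -1 + p(1+bT)`. -/
theorem piT_critical_birth_death_explicit
    (b T : ℝ) (hb : 0 < b) (hT : 0 < T)
    (p : ℝ) (hp : p ∈ Set.Ioc (0 : ℝ) 1) (hpx : p * (1 + b * T) ≠ 1) :
    piTcrit b T p = p * Rfun (-1 + p * (1 + b * T)) / Rfun (-1 + 1 * (1 + b * T)) := by
  have hden : ∫ t in (0:ℝ)..T, (1 - criticalCDF b T t) = T * Rfun (-1 + 1 * (1 + b * T)) := by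
    have hbT : 1 * (1 + b * T) ≠ 1 := by nlinarith [mul_pos hb hT]
    simpa using integral_criticalCDF_ratio hb.le hT one_pos hbT
  rw [piTcrit, integral_criticalCDF_ratio hb.le hT hp.1 hpx, hden, mul_left_comm,
    mul_div_mul_left _ _ hT.ne']
end

section
/- For all integers n≥1 and 1≤k≤n and every real x∈[0,1): ∫_x^1 y^{n-k}(y-x)^{k-1} dy = (1-x)^k · ((n-k)!/n!) · Σ_{j=1}^{n-k+1} x^{j-1} · (n-j)!/(n-j-k+1)!. -/
/-!
Substituting `y = x + (1 - x) u` turns the integral into `(1 - x)^k ∫₀¹ (x (1 - u) + u)^(n-k) u^(k-1) du`.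
Expanding the binomial leaves Beta integrals `∫₀¹ u^a (1 - u)^b du = a! b! / (a + b + 1)!`, and
`C(m, i) · i! = m! / (m - i)!` collapses the sum to the stated one.
-/

open scoped Nat

theorem integral_pow_mul_one_sub_pow (a b : ℕ) :
    ∫ u in (0:ℝ)..1, u ^ a * (1 - u) ^ b = (a ! * b ! : ℝ) / (a + b + 1)! := by
  induction b generalizing a with
  | zero =>
    simp only [pow_zero, mul_one, integral_pow, Nat.factorial_zero, Nat.add_zero,
      Nat.factorial_succ]
    push_cast
    field_simp
    simp
  | succ b ih =>
    have hsplit (u : ℝ) :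
        u ^ a * (1 - u) ^ (b + 1) = u ^ a * (1 - u) ^ b - u ^ (a + 1) * (1 - u) ^ b := by
      ring
    simp_rw [hsplit]
    rw [intervalIntegral.integral_sub (Continuous.intervalIntegrable (by fun_prop) _ _)
      (Continuous.intervalIntegrable (by fun_prop) _ _), ih, ih,
      show a + 1 + b + 1 = a + b + 1 + 1 by ring, show a + (b + 1) + 1 = a + b + 1 + 1 by ring]
    simp only [Nat.factorial_succ]
    push_cast
    field_simp
    ring

theorem integral_pow_mul_sub_pow (x : ℝ) (m c : ℕ) :
    ∫ y in x..1, y ^ m * (y - x) ^ c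
      = (1 - x) ^ (c + 1) * ∑ i ∈ Finset.range (m + 1),
          m.choose i * x ^ i * ∫ u in (0:ℝ)..1, u ^ (m - i + c) * (1 - u) ^ i := by
  have hsubst := intervalIntegral.smul_integral_comp_add_mul (fun y : ℝ => y ^ m * (y - x) ^ c)
    (a := 0) (b := 1) (1 - x) x
  simp only [mul_zero, add_zero, mul_one, add_sub_cancel, smul_eq_mul] at hsubst
  rw [← hsubst]
  have hexpand (u : ℝ) : (x + (1 - x) * u) ^ m * (x + (1 - x) * u - x) ^ c
      = (1 - x) ^ c * ∑ i ∈ Finset.range (m + 1),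
          m.choose i * x ^ i * (u ^ (m - i + c) * (1 - u) ^ i) := by
    rw [show x + (1 - x) * u - x = (1 - x) * u by ring,
      show x + (1 - x) * u = x * (1 - u) + u by ring, add_pow, Finset.mul_sum, Finset.sum_mul]
    refine Finset.sum_congr rfl fun i _ => ?_
    rw [mul_pow, mul_pow]
    ring
  simp_rw [hexpand]
  rw [intervalIntegral.integral_const_mul, intervalIntegral.integral_finsetSum
    fun i _ => Continuous.intervalIntegrable (by fun_prop) _ _]
  simp_rw [intervalIntegral.integral_const_mul, Finset.mul_sum]
  refine Finset.sum_congr rfl fun i _ => ?_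
  ring

theorem integral_pow_mul_sub_pow_eq_sum (x : ℝ) (m c : ℕ) :
    ∫ y in x..1, y ^ m * (y - x) ^ c
      = (1 - x) ^ (c + 1) * ((m ! : ℝ) / (m + c + 1)!)
          * ∑ i ∈ Finset.range (m + 1), x ^ i * ((m + c - i)! / (m - i)! : ℝ) := by
  rw [integral_pow_mul_sub_pow, mul_assoc]
  congr 1
  rw [Finset.mul_sum]
  refine Finset.sum_congr rfl fun i hi => ?_
  have him : i ≤ m := Nat.le_of_lt_succ (Finset.mem_range.1 hi)
  have hchoose : (m.choose i * i ! * (m - i)! : ℝ) = m ! := by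
    exact_mod_cast Nat.choose_mul_factorial_mul_factorial him
  rw [integral_pow_mul_one_sub_pow, show m - i + c + i + 1 = m + c + 1 by omega,
    show m - i + c = m + c - i by omega, ← hchoose]
  field_simp

/-- With truncated subtraction `a - b + 1 ≠ a + 1 - b` at `b = a + 1`, but both factorials are `1`. -/
theorem Nat.factorial_sub_add_one {a b : ℕ} (h : b ≤ a + 1) : (a - b + 1)! = (a + 1 - b)! := by
  rcases Nat.lt_or_eq_of_le h with h | rfl
  · rw [Nat.sub_add_comm (Nat.le_of_lt_succ h)]
  · simp

theorem beta_type_integral_identity_general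
    (n k : ℕ) (hk1 : 1 ≤ k) (hkn : k ≤ n)
    (x : ℝ) :
    ∫ y in x..(1:ℝ), y ^ (n - k) * (y - x) ^ (k - 1)
      = (1 - x) ^ k * ((Nat.factorial (n - k) : ℝ) / (Nat.factorial n : ℝ))
        * ∑ j ∈ Finset.Icc 1 (n - k + 1),
            x ^ (j - 1) * ((Nat.factorial (n - j) : ℝ) / (Nat.factorial (n - j - k + 1) : ℝ)) := by
  obtain ⟨c, rfl⟩ : ∃ c, k = c + 1 := ⟨k - 1, by omega⟩
  obtain ⟨m, rfl⟩ : ∃ m, n = m + c + 1 := ⟨n - (c + 1), by omega⟩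
  rw [show m + c + 1 - (c + 1) = m by omega, Nat.add_sub_cancel, integral_pow_mul_sub_pow_eq_sum,
    ← Finset.Ico_add_one_right_eq_Icc, Finset.sum_Ico_eq_sum_range, Nat.add_sub_cancel]
  congr 1
  refine Finset.sum_congr rfl fun i hi => ?_
  have him : i ≤ m := Nat.le_of_lt_succ (Finset.mem_range.1 hi)
  rw [Nat.factorial_sub_add_one (by omega), show 1 + i - 1 = i by omega,
    show m + c + 1 - (1 + i) = m + c - i by omega, show m + c - i + 1 - (c + 1) = m - i by omega]

/-- for integers `1 ≤ k ≤ n` and `x ∈ [0,1)`,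
`∫_x^1 y^{n-k}(y-x)^{k-1} dy
  = (1-x)^k ((n-k)!/n!) Σ_{j=1}^{n-k+1} x^{j-1} (n-j)!/(n-j-k+1)!`. -/
theorem beta_type_integral_identity
    (n k : ℕ) (hn : 1 ≤ n) (hk1 : 1 ≤ k) (hkn : k ≤ n)
    (x : ℝ) (hx0 : 0 ≤ x) (hx1 : x < 1) :
    ∫ y in x..(1:ℝ), y ^ (n - k) * (y - x) ^ (k - 1)
      = (1 - x) ^ k * ((Nat.factorial (n - k) : ℝ) / (Nat.factorial n : ℝ))
        * ∑ j ∈ Finset.Icc 1 (n - k + 1),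
            x ^ (j - 1) * ((Nat.factorial (n - j) : ℝ) / (Nat.factorial (n - j - k + 1) : ℝ)) :=
  beta_type_integral_identity_general n k hk1 hkn x
end

section
/- Fix integers n≥2 and 2≤k≤n, T>0, and a continuous cumulative distribution function F on [0,T] with F(0)=0, F(T)=1. Let (A_i)_{2≤i≤n} be i.i.d. with CDF F, and let S be a uniformly random k-element subset of {1,...,n}, independent of (A_i). Let i_1<i_2 be the two smallest elements of S and define the coalescence time C_1 := max{A_{i_1+1}, A_{i_1+2}, ..., A_{i_2}}. Then for every t∈[0,T], P(C_1 < t) = k·((n-k)!/n!)·Σ_{j=1}^{n-k+1} ((n-j)!/(n-j-k+1)!)·F(t)^j. -/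
open MeasureTheory ProbabilityTheory Filter Set

/-- The smallest element of a finite set of naturals (junk value `0` if empty). -/
noncomputable def minOf (s : Finset ℕ) : ℕ := if h : s.Nonempty then s.min' h else 0

/-- The second smallest element of a finite set of naturals (junk value if `card < 2`). -/
noncomputable def secondMinOf (s : Finset ℕ) : ℕ := minOf (s.erase (minOf s))

open scoped Topology

/-! The event `C₁ < t` forces the `j = i₂ - i₁` node depths between the first two sampled tips
below `t`, which has probability `F(t)^j` whatever the sample is, by independence of `S` and
`(A_i)`. Averaging over the `choose n k` samples, `i₂ - i₁ = j` occurs for exactly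
`choose (n - j) (k - 1)` of them: removing `i₁` is a bijection onto the `(k-1)`-subsets
of `{j+1, …, n}`. -/

section Order

lemma minOf_mem {s : Finset ℕ} (hs : s.Nonempty) : minOf s ∈ s := by
  rw [minOf, dif_pos hs]
  exact s.min'_mem hs

lemma minOf_le {s : Finset ℕ} {x : ℕ} (hx : x ∈ s) : minOf s ≤ x := by
  rw [minOf, dif_pos ⟨x, hx⟩]
  exact s.min'_le x hx

lemma minOf_insert {u : Finset ℕ} {a : ℕ} (ha : ∀ x ∈ u, a ≤ x) :
    minOf (insert a u) = a := by
  refine le_antisymm (minOf_le (u.mem_insert_self a)) ?_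
  rcases Finset.mem_insert.1 (minOf_mem (Finset.insert_nonempty a u)) with h | h
  · exact h.ge
  · exact ha _ h

lemma secondMinOf_insert {u : Finset ℕ} {a : ℕ} (ha : ∀ x ∈ u, a < x) :
    secondMinOf (insert a u) = minOf u := by
  rw [secondMinOf, minOf_insert fun x hx => (ha x hx).le,
    Finset.erase_insert fun h => (ha a h).false]

lemma secondMinOf_le {s : Finset ℕ} {x : ℕ} (hx : x ∈ s) (hne : x ≠ minOf s) :
    secondMinOf s ≤ x :=
  minOf_le (Finset.mem_erase.2 ⟨hne, hx⟩)

lemma minOf_lt_secondMinOf {s : Finset ℕ} (hs : 2 ≤ s.card) : minOf s < secondMinOf s := by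
  have hne : (s.erase (minOf s)).Nonempty := by
    rw [← Finset.card_pos, Finset.card_erase_of_mem (minOf_mem (Finset.card_pos.1 (by omega)))]
    omega
  have h := minOf_mem hne
  exact lt_of_le_of_ne (minOf_le (Finset.mem_of_mem_erase h)) (Finset.ne_of_mem_erase h).symm

lemma blockMax_lt_iff {A : ℕ → ℝ} {a b : ℕ} (h : a < b) {t : ℝ} :
    blockMax A a b < t ↔ ∀ i ∈ Finset.Ioc a b, A i < t := by
  rw [blockMax, dif_pos h, Finset.sup'_lt_iff]

end Order

section Counting

variable {n k : ℕ}

lemma secondMinOf_sub_minOf_mem_Icc (hk : 2 ≤ k) {s : Finset ℕ}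
    (hs : s ∈ (Finset.Icc 1 n).powersetCard k) :
    secondMinOf s - minOf s ∈ Finset.Icc 1 (n - k + 1) := by
  obtain ⟨hsub, hcard⟩ := Finset.mem_powersetCard.1 hs
  have hmin := minOf_mem (Finset.card_pos.1 (by omega : 0 < s.card))
  have hlt := minOf_lt_secondMinOf (hcard ▸ hk)
  have hmin1 := (Finset.mem_Icc.1 (hsub hmin)).1
  have htail : s.erase (minOf s) ⊆ Finset.Icc (secondMinOf s) n := fun x hx =>
    Finset.mem_Icc.2 ⟨secondMinOf_le (Finset.mem_of_mem_erase hx) (Finset.ne_of_mem_erase hx),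
      (Finset.mem_Icc.1 (hsub (Finset.mem_of_mem_erase hx))).2⟩
  have htail_card := Finset.card_le_card htail
  rw [Finset.card_erase_of_mem hmin, Nat.card_Icc] at htail_card
  rw [Finset.mem_Icc]
  omega

lemma minOf_sub_lt_of_subset_Icc {u : Finset ℕ} {j : ℕ} (hj : 1 ≤ j)
    (hu : u ⊆ Finset.Icc (j + 1) n) : ∀ x ∈ u, minOf u - j < x := fun x hx => by
  have := minOf_le hx
  have := (Finset.mem_Icc.1 (hu hx)).1
  omega

lemma erase_minOf_mem_powersetCard (hk : 2 ≤ k) {s : Finset ℕ}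
    (hs : s ∈ (Finset.Icc 1 n).powersetCard k) {j : ℕ} (hgap : secondMinOf s - minOf s = j) :
    s.erase (minOf s) ∈ (Finset.Icc (j + 1) n).powersetCard (k - 1) := by
  obtain ⟨hsub, hcard⟩ := Finset.mem_powersetCard.1 hs
  have hmin := minOf_mem (Finset.card_pos.1 (by omega : 0 < s.card))
  have hmin1 := (Finset.mem_Icc.1 (hsub hmin)).1
  have hlt := minOf_lt_secondMinOf (hcard ▸ hk)
  refine Finset.mem_powersetCard.2
    ⟨fun x hx => ?_, by rw [Finset.card_erase_of_mem hmin, hcard]⟩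
  have h1 := secondMinOf_le (Finset.mem_of_mem_erase hx) (Finset.ne_of_mem_erase hx)
  have h2 := (Finset.mem_Icc.1 (hsub (Finset.mem_of_mem_erase hx))).2
  exact Finset.mem_Icc.2 ⟨by omega, h2⟩

lemma card_filter_secondMinOf_sub_minOf_eq (hk : 2 ≤ k) {j : ℕ} (hj : 1 ≤ j) :
    {s ∈ (Finset.Icc 1 n).powersetCard k | secondMinOf s - minOf s = j}.card
      = (n - j).choose (k - 1) := by
  have htarget : ((Finset.Icc (j + 1) n).powersetCard (k - 1)).card = (n - j).choose (k - 1) := by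
    rw [Finset.card_powersetCard, Nat.card_Icc, Nat.add_sub_add_right]
  rw [← htarget]
  refine Finset.card_bij' (fun s _ => s.erase (minOf s)) (fun u _ => insert (minOf u - j) u)
    ?_ ?_ ?_ ?_
  · intro s hs
    obtain ⟨hs, hgap⟩ := Finset.mem_filter.1 hs
    exact erase_minOf_mem_powersetCard hk hs hgap
  · intro u hu
    obtain ⟨husub, hucard⟩ := Finset.mem_powersetCard.1 hu
    have hmin := Finset.mem_Icc.1 (husub (minOf_mem (Finset.card_pos.1 (by omega))))
    have hbelow := minOf_sub_lt_of_subset_Icc hj husub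
    have hnotin : minOf u - j ∉ u := fun h => (hbelow _ h).false
    refine Finset.mem_filter.2 ⟨Finset.mem_powersetCard.2 ⟨fun x hx => ?_, ?_⟩, ?_⟩
    · rcases Finset.mem_insert.1 hx with rfl | hx
      · exact Finset.mem_Icc.2 ⟨by omega, by omega⟩
      · exact Finset.mem_Icc.2 ⟨by have := (Finset.mem_Icc.1 (husub hx)).1; omega,
          (Finset.mem_Icc.1 (husub hx)).2⟩
    · rw [Finset.card_insert_of_notMem hnotin, hucard]
      omega
    · rw [secondMinOf_insert hbelow, minOf_insert fun x hx => (hbelow x hx).le]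
      omega
  · intro s hs
    obtain ⟨hs, hgap⟩ := Finset.mem_filter.1 hs
    obtain ⟨-, hcard⟩ := Finset.mem_powersetCard.1 hs
    have hlt := minOf_lt_secondMinOf (hcard ▸ hk)
    change insert (secondMinOf s - j) _ = s
    rw [show secondMinOf s - j = minOf s by omega,
      Finset.insert_erase (minOf_mem (Finset.card_pos.1 (by omega)))]
  · intro u hu
    have hbelow := minOf_sub_lt_of_subset_Icc hj (Finset.mem_powersetCard.1 hu).1
    rw [minOf_insert fun x hx => (hbelow x hx).le, Finset.erase_insert fun h => (hbelow _ h).false]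

lemma sum_powersetCard_pow_secondMinOf_sub_minOf {R : Type*} [CommSemiring R] (x : R)
    (hk : 2 ≤ k) :
    ∑ s ∈ (Finset.Icc 1 n).powersetCard k, x ^ (secondMinOf s - minOf s)
      = ∑ j ∈ Finset.Icc 1 (n - k + 1), ((n - j).choose (k - 1) : R) * x ^ j := by
  rw [← Finset.sum_fiberwise_of_maps_to fun s hs => secondMinOf_sub_minOf_mem_Icc hk hs]
  refine Finset.sum_congr rfl fun j hj => ?_
  rw [Finset.sum_congr rfl fun s hs => by rw [(Finset.mem_filter.1 hs).2], Finset.sum_const,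
    card_filter_secondMinOf_sub_minOf_eq hk (Finset.mem_Icc.1 hj).1, nsmul_eq_mul]

lemma choose_sub_div_choose (hk : 1 ≤ k) (hkn : k ≤ n) {j : ℕ} (hj : j ≤ n - k + 1) :
    ((n - j).choose (k - 1) : ℝ) / n.choose k
      = k * ((n - k).factorial / n.factorial)
        * ((n - j).factorial / (n - j - k + 1).factorial) := by
  have hfact : (n - j - k + 1).factorial = (n - j - (k - 1)).factorial := by
    rcases Nat.lt_or_ge (n - j) k with h | h
    · rw [show n - j - k + 1 = 1 by omega, show n - j - (k - 1) = 0 by omega]; rfl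
    · congr 1; omega
  have hk_fact : (k.factorial : ℝ) = k * (k - 1).factorial := by
    exact_mod_cast (Nat.mul_factorial_pred (by omega : k ≠ 0)).symm
  rw [hfact, Nat.cast_choose ℝ hkn, Nat.cast_choose ℝ (by omega : k - 1 ≤ n - j), hk_fact]
  field_simp

lemma sum_powersetCard_div_choose_mul_pow (x : ℝ) (hk : 2 ≤ k) (hkn : k ≤ n) :
    ∑ s ∈ (Finset.Icc 1 n).powersetCard k,
        1 / (n.choose k : ℝ) * x ^ (secondMinOf s - minOf s)
      = k * ((n - k).factorial / n.factorial)
        * ∑ j ∈ Finset.Icc 1 (n - k + 1),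
            ((n - j).factorial / (n - j - k + 1).factorial : ℝ) * x ^ j := by
  rw [← Finset.mul_sum, sum_powersetCard_pow_secondMinOf_sub_minOf x hk, Finset.mul_sum,
    Finset.mul_sum]
  refine Finset.sum_congr rfl fun j hj => ?_
  rw [← mul_assoc, ← mul_assoc,
    ← choose_sub_div_choose (by omega) hkn (Finset.mem_Icc.1 hj).2]
  ring

end Counting

section Probability

variable {Ω : Type*} [MeasurableSpace Ω] {μ : Measure Ω}

lemma measure_lt_eq_ofReal_of_cdf [IsFiniteMeasure μ] {X : Ω → ℝ} {F : ℝ → ℝ} {T : ℝ}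
    (hF : Continuous F) (hF0 : F 0 = 0)
    (hcdf : ∀ t ∈ Icc 0 T, (μ {ω | X ω ≤ t}).toReal = F t) {t : ℝ} (ht : t ∈ Icc 0 T) :
    μ {ω | X ω < t} = ENNReal.ofReal (F t) := by
  have hle : ∀ u ∈ Icc 0 T, μ {ω | X ω ≤ u} = ENNReal.ofReal (F u) := fun u hu => by
    rw [← hcdf u hu, ENNReal.ofReal_toReal (measure_ne_top μ _)]
  have hlt_sub_le : {ω | X ω < t} ⊆ {ω | X ω ≤ t} := fun ω (h : X ω < t) => h.le
  refine le_antisymm ((measure_mono hlt_sub_le).trans (hle t ht).le) ?_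
  rcases ht.1.eq_or_lt with rfl | ht0
  · simp [hF0]
  · have hbelow : ∀ᶠ u in 𝓝[<] t, ENNReal.ofReal (F u) ≤ μ {ω | X ω < t} := by
      filter_upwards [Ioo_mem_nhdsLT ht0] with u hu
      rw [← hle u ⟨hu.1.le, hu.2.le.trans ht.2⟩]
      exact measure_mono fun ω h => lt_of_le_of_lt h hu.2
    exact le_of_tendsto ((ENNReal.continuous_ofReal.comp hF).continuousAt.tendsto.mono_left
      nhdsWithin_le_nhds) hbelow

/-- The sets `B i` need not be measurable, so `μ E` is pinned down by bounding both `μ E` and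
`μ Eᶜ` from above by the two halves of `∑ i, μ (B i) = 1`. -/
lemma measure_eq_sum_mul_of_cover [IsProbabilityMeasure μ] {ι : Type*} (I : Finset ι)
    (B D : ι → Set Ω) {E : Set Ω} (hD : ∀ i ∈ I, MeasurableSet (D i))
    (hcover : ∀ ω, ∃ i ∈ I, ω ∈ B i ∧ (ω ∈ E ↔ ω ∈ D i))
    (hmul : ∀ i ∈ I, μ (B i ∩ D i) = μ (B i) * μ (D i))
    (hmul_compl : ∀ i ∈ I, μ (B i ∩ (D i)ᶜ) = μ (B i) * μ (D i)ᶜ)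
    (hB : ∑ i ∈ I, μ (B i) = 1) :
    μ E = ∑ i ∈ I, μ (B i) * μ (D i) := by
  have hcover_le : ∀ (G : ι → Set Ω) (E' : Set Ω),
      (∀ ω ∈ E', ∃ i ∈ I, ω ∈ B i ∩ G i) →
      μ E' ≤ ∑ i ∈ I, μ (B i ∩ G i) := fun G E' h =>
    (measure_mono fun ω hω => by
      obtain ⟨i, hi, hBG⟩ := h ω hω
      exact Set.mem_biUnion hi hBG).trans (measure_biUnion_finset_le I _)
  have hE : μ E ≤ ∑ i ∈ I, μ (B i) * μ (D i) := by
    rw [← Finset.sum_congr rfl hmul]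
    refine hcover_le D E fun ω hω => ?_
    obtain ⟨i, hi, hBi, hED⟩ := hcover ω
    exact ⟨i, hi, hBi, hED.1 hω⟩
  have hEc : μ Eᶜ ≤ ∑ i ∈ I, μ (B i) * μ (D i)ᶜ := by
    rw [← Finset.sum_congr rfl hmul_compl]
    refine hcover_le (fun i => (D i)ᶜ) Eᶜ fun ω hω => ?_
    obtain ⟨i, hi, hBi, hED⟩ := hcover ω
    exact ⟨i, hi, hBi, fun h => hω (hED.2 h)⟩
  have htotal : ∑ i ∈ I, μ (B i) * μ (D i) + ∑ i ∈ I, μ (B i) * μ (D i)ᶜ = 1 := by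
    rw [← Finset.sum_add_distrib, ← hB]
    refine Finset.sum_congr rfl fun i hi => ?_
    rw [← mul_add, measure_add_measure_compl (hD i hi), measure_univ, mul_one]
  have hfinite : ∑ i ∈ I, μ (B i) * μ (D i)ᶜ ≠ ⊤ :=
    ne_top_of_le_ne_top ENNReal.one_ne_top (htotal ▸ le_add_self)
  refine le_antisymm hE (ENNReal.le_of_add_le_add_right hfinite ?_)
  calc _ = μ univ := by rw [htotal, measure_univ]
    _ ≤ μ E + μ Eᶜ := measure_univ_le_add_compl E
    _ ≤ _ := by gcongr

lemma measure_forall_lt_eq_pow {ι : Type*} {X : ι → Ω → ℝ} (hX : iIndepFun X μ) {t : ℝ}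
    {p : ENNReal} (hp : ∀ i, μ {ω | X i ω < t} = p) (I : Finset ι) :
    μ {ω | ∀ i ∈ I, X i ω < t} = p ^ I.card := by
  have hinter : {ω | ∀ i ∈ I, X i ω < t} = ⋂ i ∈ I, X i ⁻¹' Iio t := by ext; simp
  rw [hinter, hX.measure_inter_preimage_eq_mul I fun _ _ => measurableSet_Iio]
  exact Finset.prod_eq_pow_card fun i _ => hp i

lemma measurableSet_setOf_forall_lt {ι : Type*} (I : Finset ι) (t : ℝ) :
    MeasurableSet {f : ι → ℝ | ∀ i ∈ I, f i < t} := by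
  have hinter : {f : ι → ℝ | ∀ i ∈ I, f i < t} = ⋂ i ∈ I, (fun f => f i) ⁻¹' Iio t := by
    ext; simp
  rw [hinter]
  exact Finset.measurableSet_biInter I fun i _ => measurable_pi_apply i measurableSet_Iio

lemma sum_measure_eq_one_of_uniform [IsFiniteMeasure μ] {α : Type*} (S : Ω → α)
    {I : Finset α} (hI : I.Nonempty) (hS : ∀ s ∈ I, (μ {ω | S ω = s}).toReal = 1 / I.card) :
    ∑ s ∈ I, μ {ω | S ω = s} = 1 := by
  rw [← ENNReal.toReal_eq_one_iff, ENNReal.toReal_sum fun _ _ => measure_ne_top μ _,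
    Finset.sum_congr rfl hS, Finset.sum_const, nsmul_eq_mul,
    mul_one_div_cancel (Nat.cast_ne_zero.2 hI.card_pos.ne')]

end Probability

theorem first_coalescence_time_distribution_k_of_n_general
    {Ω : Type*} [MeasurableSpace Ω] (μ : Measure Ω) [IsProbabilityMeasure μ]
    (n k : ℕ) (hk2 : 2 ≤ k) (hkn : k ≤ n)
    (T : ℝ)
    (F : ℝ → ℝ) (hFcont : Continuous F)
    (hF0 : F 0 = 0)
    (A : ℕ → Ω → ℝ) (hAmeas : ∀ i, Measurable (A i))
    (hAiid : iIndepFun A μ)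
    (hAcdf : ∀ i, ∀ t ∈ Set.Icc 0 T, (μ {ω | A i ω ≤ t}).toReal = F t)
    (S : Ω → Finset ℕ)
    (hSrange : ∀ ω, S ω ⊆ Finset.Icc 1 n ∧ (S ω).card = k)
    (hSunif : ∀ s : Finset ℕ, s ⊆ Finset.Icc 1 n → s.card = k →
      (μ {ω | S ω = s}).toReal = 1 / (n.choose k : ℝ))
    (hindep : ∀ (s : Finset ℕ) (t : Set (ℕ → ℝ)), MeasurableSet t →
      μ ({ω | S ω = s} ∩ (fun ω i => A i ω) ⁻¹' t)
        = μ {ω | S ω = s} * μ ((fun ω i => A i ω) ⁻¹' t)) :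
    ∀ t ∈ Set.Icc 0 T,
      (μ {ω | blockMax (fun i => A i ω) (minOf (S ω)) (secondMinOf (S ω)) < t}).toReal
        = (k : ℝ) * ((Nat.factorial (n - k) : ℝ) / (Nat.factorial n : ℝ))
          * ∑ j ∈ Finset.Icc 1 (n - k + 1),
              ((Nat.factorial (n - j) : ℝ) / (Nat.factorial (n - j - k + 1) : ℝ)) * F t ^ j := by
  intro t ht
  set 𝒮 := (Finset.Icc 1 n).powersetCard k
  set gapSet : Finset ℕ → Set (ℕ → ℝ) :=
    fun s => {f | ∀ i ∈ Finset.Ioc (minOf s) (secondMinOf s), f i < t}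
  have hμA : ∀ i, μ {ω | A i ω < t} = ENNReal.ofReal (F t) := fun i =>
    measure_lt_eq_ofReal_of_cdf hFcont hF0 (hAcdf i) ht
  have h𝒮 : 𝒮.card = n.choose k := by
    rw [Finset.card_powersetCard, Nat.card_Icc, Nat.add_sub_cancel]
  have hμS_sum : ∑ s ∈ 𝒮, μ {ω | S ω = s} = 1 :=
    sum_measure_eq_one_of_uniform S (Finset.card_pos.1 (h𝒮 ▸ Nat.choose_pos hkn)) fun s hs =>
      h𝒮 ▸ hSunif s (Finset.mem_powersetCard.1 hs).1 (Finset.mem_powersetCard.1 hs).2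
  have hE := measure_eq_sum_mul_of_cover (μ := μ) 𝒮 (fun s => {ω | S ω = s})
    (fun s => (fun ω i => A i ω) ⁻¹' gapSet s)
    (E := {ω | blockMax (fun i => A i ω) (minOf (S ω)) (secondMinOf (S ω)) < t})
    (fun s _ => measurable_pi_lambda _ hAmeas (measurableSet_setOf_forall_lt _ t))
    (fun ω => ⟨S ω, Finset.mem_powersetCard.2 (hSrange ω), rfl,
      blockMax_lt_iff (minOf_lt_secondMinOf ((hSrange ω).2 ▸ hk2))⟩)
    (fun s _ => hindep s _ (measurableSet_setOf_forall_lt _ t))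
    (fun s _ => hindep s _ (measurableSet_setOf_forall_lt _ t).compl) hμS_sum
  have hFt : 0 ≤ F t := hAcdf 0 t ht ▸ ENNReal.toReal_nonneg
  have hterm : ∀ s ∈ 𝒮,
      (μ {ω | S ω = s} * μ ((fun ω i => A i ω) ⁻¹' gapSet s)).toReal
      = 1 / n.choose k * F t ^ (secondMinOf s - minOf s) := fun s hs => by
    obtain ⟨hsub, hcard⟩ := Finset.mem_powersetCard.1 hs
    simp only [gapSet, preimage_ofPred_eq]
    rw [ENNReal.toReal_mul, hSunif s hsub hcard, measure_forall_lt_eq_pow hAiid hμA,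
      ENNReal.toReal_pow, ENNReal.toReal_ofReal hFt, Nat.card_Ioc]
  rw [hE, ENNReal.toReal_sum fun _ _ =>
      ENNReal.mul_ne_top (measure_ne_top _ _) (measure_ne_top _ _),
    Finset.sum_congr rfl hterm, sum_powersetCard_div_choose_mul_pow _ hk2 hkn]

/-- for i.i.d. node depths `A_2, ..., A_n` with CDF `F` and an independent
uniform random `k`-subset `S` of `{1,...,n}`, the coalescence time
`C₁ = max{A_{i₁+1}, ..., A_{i₂}}` between the two smallest sampled tips satisfies
`P(C₁ < t) = k ((n-k)!/n!) Σ_{j=1}^{n-k+1} ((n-j)!/(n-j-k+1)!) F(t)^j`. -/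
theorem first_coalescence_time_distribution_k_of_n
    {Ω : Type*} [MeasurableSpace Ω] (μ : Measure Ω) [IsProbabilityMeasure μ]
    (n k : ℕ) (hn : 2 ≤ n) (hk2 : 2 ≤ k) (hkn : k ≤ n)
    (T : ℝ) (hT : 0 < T)
    (F : ℝ → ℝ) (hFcont : Continuous F) (hFmono : Monotone F)
    (hF0 : F 0 = 0) (hFT : F T = 1)
    (A : ℕ → Ω → ℝ) (hAmeas : ∀ i, Measurable (A i))
    (hAiid : iIndepFun A μ)
    (hAcdf : ∀ i, ∀ t ∈ Set.Icc 0 T, (μ {ω | A i ω ≤ t}).toReal = F t)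
    (S : Ω → Finset ℕ)
    (hSrange : ∀ ω, S ω ⊆ Finset.Icc 1 n ∧ (S ω).card = k)
    (hSunif : ∀ s : Finset ℕ, s ⊆ Finset.Icc 1 n → s.card = k →
      (μ {ω | S ω = s}).toReal = 1 / (n.choose k : ℝ))
    (hindep : ∀ (s : Finset ℕ) (t : Set (ℕ → ℝ)), MeasurableSet t →
      μ ({ω | S ω = s} ∩ (fun ω i => A i ω) ⁻¹' t)
        = μ {ω | S ω = s} * μ ((fun ω i => A i ω) ⁻¹' t)) :
    ∀ t ∈ Set.Icc 0 T,
      (μ {ω | blockMax (fun i => A i ω) (minOf (S ω)) (secondMinOf (S ω)) < t}).toReal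
        = (k : ℝ) * ((Nat.factorial (n - k) : ℝ) / (Nat.factorial n : ℝ))
          * ∑ j ∈ Finset.Icc 1 (n - k + 1),
              ((Nat.factorial (n - j) : ℝ) / (Nat.factorial (n - j - k + 1) : ℝ)) * F t ^ j :=
  first_coalescence_time_distribution_k_of_n_general μ n k hk2 hkn T F hFcont hF0 A hAmeas hAiid
    hAcdf S hSrange hSunif hindep
end

section
/- Let b>0, 0≤d<b, r:=b-d, and define F(t) := 1 - 1/(1+(b/r)(e^{rt}-1)) for t≥0 (the node-depth distribution of the supercritical constant-rate birth–death process). For p∈(0,1], define π_∞(p) := p·∫₀^∞ (1-F(t))/(1-(1-p)F(t)) dt / ∫₀^∞ (1-F(t)) dt. Then: (i) if d>0 and bp≠r, π_∞(p) = (dp/(bp-r))·ln(bp/r)/ln(b/r); (ii) if d=0 (so b=r) and p<1, π_∞(p) = -p·ln(p)/(1-p); (iii) if d>0 and bp=r, π_∞(p) = -(1-p)/ln(p). -/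
/-!
With `r = b - d`, the node-depth tail is `1 - F(t) = r / (b e^{rt} - d)`, and
`(1 - F) / (1 - (1 - p) F)` is the same expression for the rates `(b p, b p - r)`: sampling each
lineage with probability `p` yields again a birth–death process with diversification rate `r`.
Hence `π_∞(p) = p I(b p, b p - r) / I(b, d)` with `I(b, d) = ∫₀^∞ (1 - F)`, and `I(b, d)` is
`log (b / r) / d` (an antiderivative is `log (b - d e^{-rt}) / d`) or `1 / b` when `d = 0`.
-/

open MeasureTheory Filter Set

/-- The node-depth CDF of a supercritical constant-rate birth–death process with speciation
rate `b` and extinction rate `d` (`r = b - d`): `F(t) = 1 - 1/(1+(b/r)(e^{rt}-1))`. -/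
noncomputable def bdCDF (b d t : ℝ) : ℝ :=
  1 - 1 / (1 + (b / (b - d)) * (Real.exp ((b - d) * t) - 1))

/-- The large-time phylogenetic diversity ratio
`π_∞(p) = p ∫₀^∞ (1-F)/(1-(1-p)F) dt / ∫₀^∞ (1-F) dt` for the birth–death CDF. -/
noncomputable def piInfBD (b d p : ℝ) : ℝ :=
  (p * ∫ t in Set.Ioi (0:ℝ), (1 - bdCDF b d t) / (1 - (1 - p) * bdCDF b d t))
    / ∫ t in Set.Ioi (0:ℝ), (1 - bdCDF b d t)

open Topology

theorem one_sub_bdCDF {b d : ℝ} (hdb : d ≠ b) (t : ℝ) :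
    1 - bdCDF b d t = (b - d) / (b * Real.exp ((b - d) * t) - d) := by
  have hr : b - d ≠ 0 := sub_ne_zero.mpr hdb.symm
  have h : 1 + b / (b - d) * (Real.exp ((b - d) * t) - 1)
      = (b * Real.exp ((b - d) * t) - d) / (b - d) := by
    field_simp
    ring
  rw [bdCDF, sub_sub_cancel, h, one_div_div]

theorem one_sub_bdCDF_div_one_sub_mul_bdCDF {b d : ℝ} (hb : 0 < b) (hdb : d < b) (p : ℝ)
    {t : ℝ} (ht : 0 ≤ t) :
    (1 - bdCDF b d t) / (1 - (1 - p) * bdCDF b d t)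
      = 1 - bdCDF (b * p) (b * p - (b - d)) t := by
  have hr : 0 < b - d := sub_pos.mpr hdb
  have hE : 1 ≤ Real.exp ((b - d) * t) := Real.one_le_exp (by positivity)
  have hD : b * Real.exp ((b - d) * t) - d ≠ 0 := by nlinarith
  have hF : bdCDF b d t = 1 - (b - d) / (b * Real.exp ((b - d) * t) - d) := by
    rw [← one_sub_bdCDF hdb.ne]; ring
  rw [hF, one_sub_bdCDF (by linarith)]
  simp only [sub_sub_cancel]
  field_simp
  ring

theorem piInfBD_eq_div_integral {b d : ℝ} (hb : 0 < b) (hdb : d < b) (p : ℝ) :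
    piInfBD b d p = p * (∫ t in Ioi (0:ℝ), (1 - bdCDF (b * p) (b * p - (b - d)) t))
      / ∫ t in Ioi (0:ℝ), (1 - bdCDF b d t) := by
  rw [piInfBD, setIntegral_congr_fun measurableSet_Ioi fun t ht =>
    one_sub_bdCDF_div_one_sub_mul_bdCDF hb hdb p (le_of_lt ht)]

theorem integral_one_sub_bdCDF {b d : ℝ} (hb : 0 < b) (hdb : d < b) (hd : d ≠ 0) :
    ∫ t in Ioi (0:ℝ), (1 - bdCDF b d t) = Real.log (b / (b - d)) / d := by
  set r := b - d
  have hr : 0 < r := sub_pos.mpr hdb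
  have hpos : ∀ t, 0 ≤ t → 0 < b - d * Real.exp (-(r * t)) := by
    intro t ht
    have h0 : 0 < Real.exp (-(r * t)) := Real.exp_pos _
    have h1 : Real.exp (-(r * t)) ≤ 1 := Real.exp_le_one_iff.mpr (by nlinarith)
    nlinarith
  have hderiv : ∀ x ∈ Ici (0:ℝ),
      HasDerivAt (fun t => Real.log (b - d * Real.exp (-(r * t))) / d)
        (r / (b * Real.exp (r * x) - d)) x := by
    intro x hx
    have hexp : HasDerivAt (fun t => Real.exp (-(r * t))) (Real.exp (-(r * x)) * -r) x := by
      simpa using ((hasDerivAt_id x).const_mul r).neg.exp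
    refine (((hexp.const_mul d).const_sub b).log (hpos x hx).ne').div_const d |>.congr_deriv ?_
    have hE : 1 ≤ Real.exp (r * x) := Real.one_le_exp (by nlinarith [mem_Ici.mp hx])
    have hD : b * Real.exp (r * x) - d ≠ 0 := by nlinarith
    have hD' := (hpos x hx).ne'
    rw [Real.exp_neg] at hD' ⊢
    field_simp
  have hlim : Tendsto (fun t => Real.log (b - d * Real.exp (-(r * t))) / d) atTop
      (𝓝 (Real.log b / d)) := by
    have hexp : Tendsto (fun t => Real.exp (-(r * t))) atTop (𝓝 0) :=
      Real.tendsto_exp_neg_atTop_nhds_zero.comp (tendsto_id.const_mul_atTop hr)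
    simpa using
      ((tendsto_const_nhds.sub (hexp.const_mul d)).log (by simpa using hb.ne')).div_const d
  have hnonneg : ∀ x ∈ Ioi (0:ℝ), 0 ≤ r / (b * Real.exp (r * x) - d) := fun x hx =>
    (div_pos hr (by nlinarith [Real.one_le_exp (mul_pos hr hx).le])).le
  rw [setIntegral_congr_fun measurableSet_Ioi fun t _ => one_sub_bdCDF hdb.ne t,
    integral_Ioi_of_hasDerivAt_of_nonneg' hderiv hnonneg hlim, Real.log_div hb.ne' hr.ne']
  simp only [mul_zero, neg_zero, Real.exp_zero, mul_one]
  ring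

theorem integral_one_sub_bdCDF_zero {b : ℝ} (hb : 0 < b) :
    ∫ t in Ioi (0:ℝ), (1 - bdCDF b 0 t) = 1 / b := by
  have h : ∀ t, 1 - bdCDF b 0 t = Real.exp (-b * t) := fun t => by
    rw [one_sub_bdCDF hb.ne, neg_mul, Real.exp_neg]
    simp only [sub_zero]
    field_simp
  simp_rw [h]
  rw [integral_exp_mul_Ioi (neg_lt_zero.mpr hb)]
  simp

theorem piInf_birth_death_explicit_general
    (b d : ℝ) (hb : 0 < b) (hdb : d < b)
    (p : ℝ) (hp : p ∈ Set.Ioc (0 : ℝ) 1) :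
    (0 < d → b * p ≠ b - d →
      piInfBD b d p
        = (d * p / (b * p - (b - d))) * Real.log (b * p / (b - d)) / Real.log (b / (b - d))) ∧
    (d = 0 → p < 1 → piInfBD b d p = -(p * Real.log p) / (1 - p)) ∧
    (0 < d → b * p = b - d → piInfBD b d p = -(1 - p) / Real.log p) := by
  have hbp : 0 < b * p := mul_pos hb hp.1
  have hsampled : b * p - (b - d) < b * p := by linarith
  rw [piInfBD_eq_div_integral hb hdb]
  refine ⟨fun hd hne => ?_, fun hd hp1 => ?_, fun hd heq => ?_⟩
  · rw [integral_one_sub_bdCDF hbp hsampled (sub_ne_zero.mpr hne), sub_sub_cancel,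
      integral_one_sub_bdCDF hb hdb hd.ne', div_div_eq_mul_div]
    ring
  · subst hd
    rw [integral_one_sub_bdCDF hbp hsampled (by nlinarith), integral_one_sub_bdCDF_zero hb]
    simp only [sub_zero, sub_sub_cancel, mul_div_cancel_left₀ p hb.ne']
    rw [div_div_eq_mul_div, show b * p - b = -(b * (1 - p)) by ring]
    have h1p : 1 - p ≠ 0 := by linarith
    field_simp
  · rw [sub_eq_zero.mpr heq, integral_one_sub_bdCDF_zero hbp, integral_one_sub_bdCDF hb hdb hd.ne',
      ← heq, div_mul_cancel_left₀ hb.ne', Real.log_inv, div_div_eq_mul_div,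
      show d = b * (1 - p) by linarith]
    have hp0 := hp.1.ne'
    field_simp

/-- explicit values of `π_∞(p)` for the supercritical constant-rate
birth–death process with speciation rate `b`, extinction rate `d`, `r = b - d > 0`. -/
theorem piInf_birth_death_explicit
    (b d : ℝ) (hb : 0 < b) (hd : 0 ≤ d) (hdb : d < b)
    (p : ℝ) (hp : p ∈ Set.Ioc (0 : ℝ) 1) :
    (0 < d → b * p ≠ b - d →
      piInfBD b d p
        = (d * p / (b * p - (b - d))) * Real.log (b * p / (b - d)) / Real.log (b / (b - d))) ∧
    (d = 0 → p < 1 → piInfBD b d p = -(p * Real.log p) / (1 - p)) ∧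
    (0 < d → b * p = b - d → piInfBD b d p = -(1 - p) / Real.log p) :=
  piInf_birth_death_explicit_general b d hb hdb p hp
end

section
/- Let T>0 and let G:[0,T]→[0,1] be a nondecreasing right-continuous function with G(0)=0, G(T)=1 and ∫₀^T(1-G(t))dt > 0. Define π(p) := p·∫₀^T (1-G(t))/(1-(1-p)G(t)) dt / ∫₀^T (1-G(t)) dt for p∈(0,1]. Then for every p∈(0,1), π is twice differentiable at p with second derivative π''(p) = -2·∫₀^T G(t)(1-G(t))²/(1-(1-p)G(t))³ dt / ∫₀^T (1-G(t)) dt. In particular, if the set {t∈[0,T] : 0<G(t)<1} has positive Lebesgue measure, then π''(p)<0 for all p∈(0,1), i.e. π is strictly concave on (0,1). -/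
/-!
With `K p y = (1 - y) / (1 - (1 - p) y)` one has `∂ₚ (p K) = K²` and
`∂ₚ (K²) = -2 y (1 - y)² / (1 - (1 - p) y)³`. For `y ∈ [0, 1]` the denominator
`(1 - y) + p y` dominates both `1 - y` and `p y`, so these derivatives are bounded uniformly for
`p` near any `p₀ > 0`, and `π` may be differentiated twice under the integral sign. The integrand of
`π''` is positive exactly where `0 < G < 1`, which gives `π'' < 0` and hence strict concavity.
-/

open MeasureTheory Filter Set

/-- The phylogenetic diversity ratio
`π(p) = p ∫₀^T (1-G)/(1-(1-p)G) dt / ∫₀^T (1-G) dt`. -/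
noncomputable def pdRatio (G : ℝ → ℝ) (T p : ℝ) : ℝ :=
  p * (∫ t in (0:ℝ)..T, (1 - G t) / (1 - (1 - p) * G t)) / ∫ t in (0:ℝ)..T, (1 - G t)

/-- The derivative of the phylogenetic diversity ratio:
`π'(p) = ∫₀^T ((1-G)/(1-(1-p)G))² dt / ∫₀^T (1-G) dt`. -/
noncomputable def pdRatioDeriv (G : ℝ → ℝ) (T p : ℝ) : ℝ :=
  (∫ t in (0:ℝ)..T, ((1 - G t) / (1 - (1 - p) * G t)) ^ 2) / ∫ t in (0:ℝ)..T, (1 - G t)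

/-- The second derivative of the phylogenetic diversity ratio:
`π''(p) = -2 ∫₀^T G(1-G)²/(1-(1-p)G)³ dt / ∫₀^T (1-G) dt`. -/
noncomputable def pdRatioDeriv2 (G : ℝ → ℝ) (T p : ℝ) : ℝ :=
  -2 * (∫ t in (0:ℝ)..T, G t * (1 - G t) ^ 2 / (1 - (1 - p) * G t) ^ 3)
    / ∫ t in (0:ℝ)..T, (1 - G t)

open scoped Topology

noncomputable def pdKernel (p y : ℝ) : ℝ := (1 - y) / (1 - (1 - p) * y)

noncomputable def pdConcavityKernel (p y : ℝ) : ℝ := y * (1 - y) ^ 2 / (1 - (1 - p) * y) ^ 3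

section Kernel

variable {x y : ℝ}

theorem pdKernel_denom_pos (hx : 0 < x) (hy : y ∈ Icc (0:ℝ) 1) : 0 < 1 - (1 - x) * y := by
  obtain ⟨hy0, hy1⟩ := hy
  rcases le_or_gt x 1 with hx1 | hx1 <;> nlinarith

theorem pdKernel_mem_Icc (hx : 0 ≤ x) (hy : y ∈ Icc (0:ℝ) 1) : pdKernel x y ∈ Icc (0:ℝ) 1 := by
  obtain ⟨hy0, hy1⟩ := hy
  have hD : 1 - y ≤ 1 - (1 - x) * y := by nlinarith
  exact ⟨div_nonneg (by linarith) (by linarith), div_le_one_of_le₀ hD (by linarith)⟩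

theorem pdConcavityKernel_nonneg (hx : 0 < x) (hy : y ∈ Icc (0:ℝ) 1) :
    0 ≤ pdConcavityKernel x y := by
  have hD := pdKernel_denom_pos hx hy
  have hy0 := hy.1
  unfold pdConcavityKernel
  positivity

theorem pdConcavityKernel_pos (hx : 0 < x) (hy : y ∈ Ioo (0:ℝ) 1) :
    0 < pdConcavityKernel x y := by
  have hD := pdKernel_denom_pos hx (Ioo_subset_Icc_self hy)
  have hy1 : 0 < 1 - y := sub_pos.2 hy.2
  have hy0 := hy.1
  unfold pdConcavityKernel
  positivity

theorem pdConcavityKernel_le_inv (hx : 0 < x) (hy : y ∈ Icc (0:ℝ) 1) :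
    pdConcavityKernel x y ≤ x⁻¹ := by
  have hD := pdKernel_denom_pos hx hy
  obtain ⟨hy0, hy1⟩ := hy
  rw [pdConcavityKernel, ← one_div, div_le_div_iff₀ (by positivity) hx, one_mul]
  have hxy : x * y ≤ 1 - (1 - x) * y := by linarith
  have hsq : (1 - y) ^ 2 ≤ (1 - (1 - x) * y) ^ 2 :=
    pow_le_pow_left₀ (by linarith) (by nlinarith) 2
  calc y * (1 - y) ^ 2 * x = (x * y) * (1 - y) ^ 2 := by ring
    _ ≤ (1 - (1 - x) * y) * (1 - (1 - x) * y) ^ 2 := by gcongr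
    _ = (1 - (1 - x) * y) ^ 3 := by ring

theorem measurable_pdKernel (x : ℝ) : Measurable (pdKernel x) := by
  unfold pdKernel
  fun_prop

theorem measurable_pdConcavityKernel (x : ℝ) : Measurable (pdConcavityKernel x) := by
  unfold pdConcavityKernel
  fun_prop

theorem hasDerivAt_pdKernel_denom (x y : ℝ) :
    HasDerivAt (fun x => 1 - (1 - x) * y) y x := by
  simpa using (((hasDerivAt_id x).const_sub 1).mul_const y).const_sub 1

theorem hasDerivAt_mul_pdKernel (hD : 1 - (1 - x) * y ≠ 0) :
    HasDerivAt (fun x => x * pdKernel x y) (pdKernel x y ^ 2) x := by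
  simp only [pdKernel, ← mul_div_assoc]
  refine (((hasDerivAt_id x).mul_const (1 - y)).div
    (hasDerivAt_pdKernel_denom x y) hD).congr_deriv ?_
  simp only [id]
  field_simp
  ring

theorem hasDerivAt_pdKernel_sq (hD : 1 - (1 - x) * y ≠ 0) :
    HasDerivAt (fun x => pdKernel x y ^ 2) (-2 * pdConcavityKernel x y) x := by
  refine (((hasDerivAt_const x (1 - y)).div
    (hasDerivAt_pdKernel_denom x y) hD).pow 2).congr_deriv ?_
  norm_num [Pi.div_apply, pdConcavityKernel]
  field_simp

end Kernel

section Integral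

variable {α : Type*} [MeasurableSpace α] {μ : Measure α} [IsFiniteMeasure μ] {g : α → ℝ}
  {S : Set ℝ}

theorem integrable_comp_of_abs_le {h : ℝ → ℝ} {C : ℝ} (hg : AEMeasurable g μ)
    (hgS : ∀ᵐ t ∂μ, g t ∈ S) (hh : Measurable h) (hC : ∀ y ∈ S, |h y| ≤ C) :
    Integrable (fun t => h (g t)) μ :=
  .of_bound (hh.comp_aemeasurable hg).aestronglyMeasurable C (hgS.mono fun _ ht => hC _ ht)

theorem hasDerivAt_integral_comp_of_abs_deriv_le {F F' : ℝ → ℝ → ℝ} {s : Set ℝ} {p C D : ℝ}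
    (hg : AEMeasurable g μ) (hgS : ∀ᵐ t ∂μ, g t ∈ S) (hs : s ∈ 𝓝 p)
    (hF : ∀ x, Measurable (F x)) (hF' : Measurable (F' p)) (hFp : ∀ y ∈ S, |F p y| ≤ D)
    (hF'_le : ∀ x ∈ s, ∀ y ∈ S, |F' x y| ≤ C)
    (hderiv : ∀ x ∈ s, ∀ y ∈ S, HasDerivAt (F · y) (F' x y) x) :
    HasDerivAt (fun x => ∫ t, F x (g t) ∂μ) (∫ t, F' p (g t) ∂μ) p :=
  (hasDerivAt_integral_of_dominated_loc_of_deriv_le (bound := fun _ => C) hs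
    (.of_forall fun x => ((hF x).comp_aemeasurable hg).aestronglyMeasurable)
    (integrable_comp_of_abs_le hg hgS (hF p) hFp)
    (hF'.comp_aemeasurable hg).aestronglyMeasurable
    (hgS.mono fun _ ht x hx => hF'_le x hx _ ht) (integrable_const C)
    (hgS.mono fun _ ht x hx => hderiv x hx _ ht)).2

variable {p : ℝ}

theorem hasDerivAt_integral_mul_pdKernel (hg : AEMeasurable g μ)
    (hg01 : ∀ᵐ t ∂μ, g t ∈ Icc (0:ℝ) 1) (hp : 0 < p) :
    HasDerivAt (fun x => ∫ t, x * pdKernel x (g t) ∂μ) (∫ t, pdKernel p (g t) ^ 2 ∂μ) p := by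
  refine hasDerivAt_integral_comp_of_abs_deriv_le (C := 1) (D := p) hg hg01 (Ioi_mem_nhds hp)
    (fun x => (measurable_pdKernel x).const_mul x) ((measurable_pdKernel p).pow_const 2)
    (fun y hy => ?_) (fun x hx y hy => ?_)
    (fun x hx y hy => hasDerivAt_mul_pdKernel (pdKernel_denom_pos hx hy).ne')
  · obtain ⟨hK0, hK1⟩ := pdKernel_mem_Icc hp.le hy
    rw [abs_of_nonneg (by positivity)]
    exact mul_le_of_le_one_right hp.le hK1
  · obtain ⟨hK0, hK1⟩ := pdKernel_mem_Icc (le_of_lt hx) hy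
    rw [abs_of_nonneg (by positivity)]
    exact pow_le_one₀ hK0 hK1

theorem hasDerivAt_integral_pdKernel_sq (hg : AEMeasurable g μ)
    (hg01 : ∀ᵐ t ∂μ, g t ∈ Icc (0:ℝ) 1) (hp : 0 < p) :
    HasDerivAt (fun x => ∫ t, pdKernel x (g t) ^ 2 ∂μ)
      (-2 * ∫ t, pdConcavityKernel p (g t) ∂μ) p := by
  rw [← integral_const_mul]
  refine hasDerivAt_integral_comp_of_abs_deriv_le (C := 4 / p) (D := 1) hg hg01
    (Ioi_mem_nhds (half_lt_self hp)) (fun x => (measurable_pdKernel x).pow_const 2)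
    ((measurable_pdConcavityKernel p).const_mul _) (fun y hy => ?_) (fun x hx y hy => ?_)
    (fun x hx y hy => hasDerivAt_pdKernel_sq (pdKernel_denom_pos ((half_pos hp).trans hx) hy).ne')
  · obtain ⟨hK0, hK1⟩ := pdKernel_mem_Icc hp.le hy
    rw [abs_of_nonneg (by positivity)]
    exact pow_le_one₀ hK0 hK1
  · have hx0 : 0 < x := (half_pos hp).trans hx
    calc |-2 * pdConcavityKernel x y| = 2 * pdConcavityKernel x y := by
          rw [abs_mul, abs_neg, abs_two, abs_of_nonneg (pdConcavityKernel_nonneg hx0 hy)]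
      _ ≤ 2 * x⁻¹ := by gcongr; exact pdConcavityKernel_le_inv hx0 hy
      _ ≤ 4 / p := by
          rw [← div_eq_mul_inv, div_le_div_iff₀ hx0 hp]
          linarith [mem_Ioi.1 hx]

theorem integral_pdConcavityKernel_pos (hg : AEMeasurable g μ)
    (hg01 : ∀ᵐ t ∂μ, g t ∈ Icc (0:ℝ) 1) (hp : 0 < p) (hμ : 0 < μ {t | 0 < g t ∧ g t < 1}) :
    0 < ∫ t, pdConcavityKernel p (g t) ∂μ := by
  have hint := integrable_comp_of_abs_le hg hg01 (measurable_pdConcavityKernel p) fun y hy => by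
    rw [abs_of_nonneg (pdConcavityKernel_nonneg hp hy)]
    exact pdConcavityKernel_le_inv hp hy
  rw [integral_pos_iff_support_of_nonneg_ae
    (hg01.mono fun t ht => pdConcavityKernel_nonneg hp ht) hint]
  exact hμ.trans_le (measure_mono fun t ht => (pdConcavityKernel_pos hp ht).ne')

end Integral

theorem strictConcaveOn_of_hasDerivAt_of_hasDerivAt_neg {s : Set ℝ} {f f' f'' : ℝ → ℝ}
    (hs : IsOpen s) (hconv : Convex ℝ s) (hf : ∀ x ∈ s, HasDerivAt f (f' x) x)
    (hf' : ∀ x ∈ s, HasDerivAt f' (f'' x) x) (hf'' : ∀ x ∈ s, f'' x < 0) :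
    StrictConcaveOn ℝ s f := by
  have hanti : StrictAntiOn f' s := strictAntiOn_of_hasDerivWithinAt_neg hconv
    (fun x hx => (hf' x hx).continuousAt.continuousWithinAt)
    (fun x hx => (hf' x (interior_subset hx)).hasDerivWithinAt)
    (fun x hx => hf'' x (interior_subset hx))
  refine StrictAntiOn.strictConcaveOn_of_deriv hconv
    (fun x hx => (hf x hx).continuousAt.continuousWithinAt) ?_
  rw [hs.interior_eq]
  exact hanti.congr fun x hx => ((hf x hx).deriv).symm

section PdRatio

variable {G : ℝ → ℝ} {T : ℝ}

theorem pdRatio_eq (hT : 0 ≤ T) :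
    pdRatio G T = fun p =>
      (∫ t in Ioc 0 T, p * pdKernel p (G t)) / ∫ t in (0:ℝ)..T, (1 - G t) := by
  funext p
  rw [pdRatio, intervalIntegral.integral_of_le hT, integral_const_mul]
  rfl

theorem pdRatioDeriv_eq (hT : 0 ≤ T) :
    pdRatioDeriv G T = fun p =>
      (∫ t in Ioc 0 T, pdKernel p (G t) ^ 2) / ∫ t in (0:ℝ)..T, (1 - G t) := by
  funext p
  rw [pdRatioDeriv, intervalIntegral.integral_of_le hT]
  rfl

theorem pdRatioDeriv2_eq (hT : 0 ≤ T) (p : ℝ) :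
    pdRatioDeriv2 G T p =
      -2 * (∫ t in Ioc 0 T, pdConcavityKernel p (G t)) / ∫ t in (0:ℝ)..T, (1 - G t) := by
  rw [pdRatioDeriv2, intervalIntegral.integral_of_le hT]
  rfl

end PdRatio

theorem pdRatio_second_derivative_and_concavity_general
    (T : ℝ) (hT : 0 < T) (G : ℝ → ℝ)
    (hGmono : MonotoneOn G (Set.Icc 0 T))
    (hGrange : ∀ t ∈ Set.Icc 0 T, G t ∈ Set.Icc (0:ℝ) 1)
    (hInt : 0 < ∫ t in (0:ℝ)..T, (1 - G t)) :
    (∀ p ∈ Set.Ioo (0:ℝ) 1,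
      HasDerivAt (pdRatio G T) (pdRatioDeriv G T p) p ∧
      HasDerivAt (pdRatioDeriv G T) (pdRatioDeriv2 G T p) p) ∧
    (0 < volume {t : ℝ | t ∈ Set.Icc 0 T ∧ 0 < G t ∧ G t < 1} →
      (∀ p ∈ Set.Ioo (0:ℝ) 1, pdRatioDeriv2 G T p < 0) ∧
      StrictConcaveOn ℝ (Set.Ioo (0:ℝ) 1) (pdRatio G T)) := by
  have hGm : AEMeasurable G (volume.restrict (Ioc 0 T)) :=
    aemeasurable_restrict_of_monotoneOn measurableSet_Ioc (hGmono.mono Ioc_subset_Icc_self)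
  have hG01 : ∀ᵐ t ∂volume.restrict (Ioc 0 T), G t ∈ Icc (0:ℝ) 1 :=
    ae_restrict_of_forall_mem measurableSet_Ioc fun t ht => hGrange t (Ioc_subset_Icc_self ht)
  have hderiv : ∀ p ∈ Ioo (0:ℝ) 1, HasDerivAt (pdRatio G T) (pdRatioDeriv G T p) p ∧
      HasDerivAt (pdRatioDeriv G T) (pdRatioDeriv2 G T p) p := fun p hp => by
    rw [pdRatio_eq hT.le, pdRatioDeriv_eq hT.le, pdRatioDeriv2_eq hT.le]
    exact ⟨(hasDerivAt_integral_mul_pdKernel hGm hG01 hp.1).div_const _,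
      (hasDerivAt_integral_pdKernel_sq hGm hG01 hp.1).div_const _⟩
  refine ⟨hderiv, fun hvol => ?_⟩
  have hμ : 0 < volume.restrict (Ioc 0 T) {t | 0 < G t ∧ G t < 1} := by
    rw [Measure.restrict_apply' measurableSet_Ioc, inter_comm]
    exact hvol.trans_eq (measure_congr (Ioc_ae_eq_Icc.symm.inter (ae_eq_refl _)))
  have hneg : ∀ p ∈ Ioo (0:ℝ) 1, pdRatioDeriv2 G T p < 0 := fun p hp => by
    rw [pdRatioDeriv2_eq hT.le]
    have hJ := integral_pdConcavityKernel_pos hGm hG01 hp.1 hμ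
    exact div_neg_of_neg_of_pos (by linarith) hInt
  exact ⟨hneg, strictConcaveOn_of_hasDerivAt_of_hasDerivAt_neg isOpen_Ioo (convex_Ioo 0 1)
    (fun p hp => (hderiv p hp).1) (fun p hp => (hderiv p hp).2) hneg⟩

/-- on `(0,1)` the PD ratio `π` is twice differentiable with second derivative
`π''(p) = -2 ∫₀^T G(1-G)²/(1-(1-p)G)³ dt / ∫₀^T (1-G) dt`; if moreover
`{t ∈ [0,T] : 0 < G t < 1}` has positive Lebesgue measure then `π''(p) < 0` on `(0,1)`,
i.e. `π` is strictly concave on `(0,1)`. -/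
theorem pdRatio_second_derivative_and_concavity
    (T : ℝ) (hT : 0 < T) (G : ℝ → ℝ)
    (hGmono : MonotoneOn G (Set.Icc 0 T))
    (hGrc : ∀ t ∈ Set.Ico 0 T, ContinuousWithinAt G (Set.Ici t) t)
    (hGrange : ∀ t ∈ Set.Icc 0 T, G t ∈ Set.Icc (0:ℝ) 1)
    (hG0 : G 0 = 0) (hGT : G T = 1)
    (hInt : 0 < ∫ t in (0:ℝ)..T, (1 - G t)) :
    (∀ p ∈ Set.Ioo (0:ℝ) 1,
      HasDerivAt (pdRatio G T) (pdRatioDeriv G T p) p ∧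
      HasDerivAt (pdRatioDeriv G T) (pdRatioDeriv2 G T p) p) ∧
    (0 < volume {t : ℝ | t ∈ Set.Icc 0 T ∧ 0 < G t ∧ G t < 1} →
      (∀ p ∈ Set.Ioo (0:ℝ) 1, pdRatioDeriv2 G T p < 0) ∧
      StrictConcaveOn ℝ (Set.Ioo (0:ℝ) 1) (pdRatio G T)) :=
  pdRatio_second_derivative_and_concavity_general T hT G hGmono hGrange hInt
end
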